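/- For any positive vector c ∈ ℝᵏ and any ρ < 1, every minimizer x* of the proxy objective S(f(x)) = Σᵢ cᵢ[fᵢ(x) − ρ·max(fᵢ(x), rᵢ)] over a feasible set X is weakly Pareto-optimal for the vector minimization of (f₁(x), …, f_k(x)) over X; i.e., there is no x ∈ X with fᵢ(x) ≤ fᵢ(x*) for all i and fⱼ(x) < fⱼ(x*) for some j. -/
import Mathlib

lemma aux_mono (ρ : ℝ) (hρ : ρ < 1) (r : ℝ) {s t : ℝ} (h : s ≤ t) :
    s - ρ * max s r ≤ t - ρ * max t r := by
  rcases le_or_gt ρ 0 with hρ0 | hρ0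
  · have : ρ * max t r ≤ ρ * max s r :=
      mul_le_mul_of_nonpos_left (max_le_max h le_rfl) hρ0
    linarith
  · have h1 : max t r - max s r ≤ t - s := by
      rcases le_total s r with hs | hs <;> rcases le_total t r with ht | ht <;>
        simp [max_eq_left, max_eq_right, *] <;> linarith
    nlinarith [mul_le_mul_of_nonneg_left h1 hρ0.le]

lemma aux_strict (ρ : ℝ) (hρ : ρ < 1) (r : ℝ) {s t : ℝ} (h : s < t) :
    s - ρ * max s r < t - ρ * max t r := by
  rcases le_or_gt ρ 0 with hρ0 | hρ0
  · have : ρ * max t r ≤ ρ * max s r :=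
      mul_le_mul_of_nonpos_left (max_le_max h.le le_rfl) hρ0
    linarith
  · have h1 : max t r - max s r ≤ t - s := by
      rcases le_total s r with hs | hs <;> rcases le_total t r with ht | ht <;>
        simp [max_eq_left, max_eq_right, *] <;> linarith
    nlinarith [mul_le_mul_of_nonneg_left h1 hρ0.le]

theorem proxy_minimizer_weak_pareto {X : Type*} [Nonempty X] (k : ℕ)
    (f : X → Fin k → ℝ) (r c : Fin k → ℝ) (ρ : ℝ)
    (hc : ∀ i, 0 < c i) (hρ : ρ < 1) (xstar : X)
    (hmin : ∀ x : X,
      ∑ i, c i * (f xstar i - ρ * max (f xstar i) (r i)) ≤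
        ∑ i, c i * (f x i - ρ * max (f x i) (r i))) :
    ¬ ∃ x : X, (∀ i, f x i ≤ f xstar i) ∧ (∃ j, f x j < f xstar j) := by
  rintro ⟨x, hle, j, hj⟩
  have hsum : ∑ i, c i * (f x i - ρ * max (f x i) (r i)) <
      ∑ i, c i * (f xstar i - ρ * max (f xstar i) (r i)) := by
    apply Finset.sum_lt_sum
    · intro i _
      exact mul_le_mul_of_nonneg_left (aux_mono ρ hρ (r i) (hle i)) (hc i).le
    · exact ⟨j, Finset.mem_univ j,
        mul_lt_mul_of_pos_left (aux_strict ρ hρ (r j) hj) (hc j)⟩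
  exact absurd (hmin x) (not_le.mpr hsum)
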